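/- For all real numbers x and t, the series Σ_{n=0}^∞ He_n(x)·tⁿ/n! converges absolutely and its sum equals exp(x·t − t²/2). -/

import Mathlib

/-!
The coefficient of `t ^ n` in the Cauchy product of `exp (x * t) = ∑ x ^ k t ^ k / k!` and
`exp (-t ^ 2 / 2) = ∑ (-1/2) ^ j t ^ (2 j) / j!` is `He n x / n!`: by the explicit formula
`coeff (hermite (k + 2 j)) k = (-1) ^ j (2 j - 1)‼ binom(k + 2 j, k)` this reduces to
`(2 j)! = 2 ^ j j! (2 j - 1)‼`. Both factors converge absolutely, hence so does the product.
-/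

/-- Probabilists' Hermite polynomials evaluated over ℝ. -/
noncomputable def He (n : ℕ) (x : ℝ) : ℝ := Polynomial.aeval x (Polynomial.hermite n)

open Finset Polynomial
open scoped Nat

theorem hasSum_sum_antidiagonal_of_summable_norm {R : Type*} [NormedRing R]
    {f g : ℕ → R} {a b : R} (hf : HasSum f a) (hg : HasSum g b)
    (hf' : Summable fun n => ‖f n‖) (hg' : Summable fun n => ‖g n‖) :
    HasSum (fun n => ∑ p ∈ antidiagonal n, f p.1 * g p.2) (a * b) := by
  rw [← hf.tsum_eq, ← hg.tsum_eq,
    tsum_mul_tsum_eq_tsum_sum_antidiagonal_of_summable_norm' hf' hf.summable hg' hg.summable]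
  exact (summable_sum_mul_antidiagonal_of_summable_norm' hf' hf.summable hg' hg.summable).hasSum

theorem Nat.two_pow_mul_factorial_mul_doubleFactorial (j : ℕ) :
    2 ^ j * j ! * (2 * j - 1)‼ = (2 * j)! := by
  cases j with
  | zero => rfl
  | succ j =>
    rw [← Nat.doubleFactorial_two_mul, show 2 * (j + 1) = 2 * j + 1 + 1 by ring,
      Nat.add_sub_cancel, Nat.factorial_eq_mul_doubleFactorial]

noncomputable def gaussianCoeff (m : ℕ) : ℝ :=
  if Even m then (-2⁻¹ : ℝ) ^ (m / 2) / (m / 2)! else 0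

theorem gaussianCoeff_two_mul (j : ℕ) : gaussianCoeff (2 * j) = (-2⁻¹) ^ j / j ! := by
  simp [gaussianCoeff]

theorem gaussianCoeff_eq_zero_of_odd {m : ℕ} (hm : Odd m) : gaussianCoeff m = 0 := by
  simp [gaussianCoeff, Nat.not_even_iff_odd.mpr hm]

theorem gaussianCoeff_two_mul_mul_pow (j : ℕ) (t : ℝ) :
    gaussianCoeff (2 * j) * t ^ (2 * j) = (-(t ^ 2 / 2)) ^ j / j ! := by
  rw [gaussianCoeff_two_mul, pow_mul]
  ring

theorem gaussianCoeff_mul_pow_of_notMem_range {m : ℕ} (hm : m ∉ Set.range (2 * ·)) (t : ℝ) :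
    gaussianCoeff m * t ^ m = 0 := by
  have hodd : Odd m := Nat.not_even_iff_odd.mp fun ⟨j, hj⟩ => hm ⟨j, by dsimp only; omega⟩
  rw [gaussianCoeff_eq_zero_of_odd hodd, zero_mul]

theorem hasSum_gaussianCoeff_mul_pow (t : ℝ) :
    HasSum (fun m => gaussianCoeff m * t ^ m) (Real.exp (-(t ^ 2 / 2))) := by
  rw [← (mul_right_injective₀ two_ne_zero).hasSum_iff
    fun m hm => gaussianCoeff_mul_pow_of_notMem_range hm t]
  simp only [Function.comp_def, gaussianCoeff_two_mul_mul_pow, Real.exp_eq_exp_ℝ]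
  exact NormedSpace.expSeries_div_hasSum_exp _

theorem summable_norm_gaussianCoeff_mul_pow (t : ℝ) :
    Summable fun m => ‖gaussianCoeff m * t ^ m‖ := by
  rw [← (mul_right_injective₀ two_ne_zero).summable_iff
    fun m hm => by rw [gaussianCoeff_mul_pow_of_notMem_range hm t, norm_zero]]
  simp only [Function.comp_def, gaussianCoeff_two_mul_mul_pow]
  exact NormedSpace.norm_expSeries_div_summable _

theorem coeff_hermite_add_div_factorial (k m : ℕ) :
    ((hermite (k + m)).coeff k : ℝ) / (k + m)! = gaussianCoeff m / k ! := by
  rcases Nat.even_or_odd m with ⟨j, rfl⟩ | hm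
  · rw [← two_mul, gaussianCoeff_two_mul, add_comm, coeff_hermite_explicit,
      ← Nat.add_choose_mul_factorial_mul_factorial, ← Nat.two_pow_mul_factorial_mul_doubleFactorial]
    push_cast
    have hchoose : ((2 * j + k).choose k : ℝ) ≠ 0 :=
      Nat.cast_ne_zero.mpr (Nat.choose_pos (by omega)).ne'
    field_simp
    rw [← mul_pow]
    norm_num
  · rw [coeff_hermite_of_odd_add (by obtain ⟨j, rfl⟩ := hm; exact ⟨k + j, by ring⟩),
      gaussianCoeff_eq_zero_of_odd hm]
    simp

theorem He_mul_pow_div_factorial_eq_sum_antidiagonal (n : ℕ) (x t : ℝ) :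
    He n x * t ^ n / n ! =
      ∑ p ∈ antidiagonal n, (x * t) ^ p.1 / p.1 ! * (gaussianCoeff p.2 * t ^ p.2) := by
  rw [He, aeval_eq_sum_range, natDegree_hermite, sum_mul, sum_div,
    Nat.sum_antidiagonal_eq_sum_range_succ_mk]
  refine sum_congr rfl fun k hk => ?_
  obtain ⟨m, rfl⟩ := Nat.exists_eq_add_of_le (Nat.lt_succ_iff.mp (mem_range.mp hk))
  rw [Nat.add_sub_cancel_left, zsmul_eq_mul, mul_assoc, mul_comm, mul_div_assoc,
    coeff_hermite_add_div_factorial, pow_add]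
  dsimp only
  ring

theorem hermite_generating_function (x t : ℝ) :
    Summable (fun n : ℕ => |He n x * t ^ n / (n.factorial : ℝ)|) ∧
    HasSum (fun n : ℕ => He n x * t ^ n / (n.factorial : ℝ))
      (Real.exp (x * t - t ^ 2 / 2)) := by
  have hexp : HasSum (fun k => (x * t) ^ k / k !) (Real.exp (x * t)) := by
    rw [Real.exp_eq_exp_ℝ]
    exact NormedSpace.expSeries_div_hasSum_exp _
  have hexp_norm := NormedSpace.norm_expSeries_div_summable (x * t)
  have hgauss_norm := summable_norm_gaussianCoeff_mul_pow t
  simp_rw [He_mul_pow_div_factorial_eq_sum_antidiagonal, ← Real.norm_eq_abs, sub_eq_add_neg,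
    Real.exp_add]
  have habs := summable_norm_sum_mul_antidiagonal_of_summable_norm hexp_norm hgauss_norm
  have hsum := hasSum_sum_antidiagonal_of_summable_norm hexp (hasSum_gaussianCoeff_mul_pow t)
    hexp_norm hgauss_norm
  exact ⟨habs, hsum⟩
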